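/- Each coordinate function x_i of the n-dimensional Peano curve is (1/n)-Hölder continuous: there exists λ > 0 such that |x_i(t) − x_i(t')| ≤ λ |t − t'|^{1/n} for all t, t' ∈ [0,1]. -/

import Mathlib

open scoped BigOperators ENNReal

/-- `Φ` : evaluation of a ternary digit sequence (digits at indices `1,2,3,…`). -/
noncomputable def Phi (t : ℕ → ℕ) : ℝ := ∑' k : ℕ, (t (k + 1) : ℝ) / 3 ^ (k + 1)

/-- A sequence of ternary digits (elements of `D = {0,1,2}`). -/
def IsDigitSeq (t : ℕ → ℕ) : Prop := ∀ k, t k ≤ 2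

/-- `S_{i+jn}(𝐭) = ∑_{k=1}^{i+jn} t_k − ∑_{s=0}^{j} t_{i+sn}`. -/
def S (n i j : ℕ) (t : ℕ → ℕ) : ℤ :=
  (∑ k ∈ Finset.Icc 1 (i + j * n), (t k : ℤ)) -
    ∑ s ∈ Finset.range (j + 1), (t (i + s * n) : ℤ)

/-- The operator `ξ(a) = 2 − a`, as a permutation of `ℝ` (so that integer powers
`ξ^m`, `m : ℤ`, make sense). -/
def xiPerm : Equiv.Perm ℝ :=
  ⟨fun a => 2 - a, fun a => 2 - a, fun a => by dsimp; ring, fun a => by dsimp; ring⟩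

/-- `x_i(𝐭) = ∑_{j=0}^∞ ξ^{S_{i+jn}(𝐭)}(t_{i+jn}) / 3^{j+1}`. -/
noncomputable def xcoord (n i : ℕ) (t : ℕ → ℕ) : ℝ :=
  ∑' j : ℕ, ((xiPerm ^ (S n i j t)) ((t (i + j * n) : ℝ))) / 3 ^ (j + 1)

/-- The canonical ternary digit expansion of `t ∈ [0,1]` (all digits `2` for `t = 1`). -/
noncomputable def ternaryDigit (t : ℝ) (k : ℕ) : ℕ :=
  if t = 1 then 2 else (⌊t * 3 ^ k⌋).toNat % 3

/-- The `i`-th coordinate function of the `n`-dimensional Peano curve, as a function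
on `[0,1]` (via the canonical ternary representation; by well-definedness this agrees
with `xcoord` on any ternary representation). -/
noncomputable def peanoCoord (n i : ℕ) (t : ℝ) : ℝ := xcoord n i (ternaryDigit t)

/-! ### Auxiliary material -/

/-- `ξ^m` as a plain function: identity for even `m`, `x ↦ 2 - x` for odd `m`. -/
def xiIter (m : ℤ) (x : ℝ) : ℝ := if Even m then x else 2 - x

lemma xiPerm_apply (x : ℝ) : xiPerm x = 2 - x := rfl

lemma xiPerm_sq : xiPerm * xiPerm = 1 := by
  ext x
  simp [xiPerm, Equiv.Perm.mul_apply]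

lemma xiPerm_zpow (m : ℤ) (x : ℝ) : (xiPerm ^ m) x = xiIter m x := by
  have h2 : xiPerm ^ (2 : ℤ) = 1 := by
    rw [show (2 : ℤ) = ((2 : ℕ) : ℤ) by norm_num, zpow_natCast, sq, xiPerm_sq]
  rcases Int.even_or_odd m with ⟨k, hk⟩ | ⟨k, hk⟩
  · have hm : xiPerm ^ m = 1 := by
      rw [hk, show k + k = 2 * k by ring, zpow_mul, h2, one_zpow]
    rw [hm, xiIter, if_pos ⟨k, hk⟩]
    rfl
  · have hm : xiPerm ^ m = xiPerm := by
      rw [hk, zpow_add, zpow_mul, h2, one_zpow, one_mul, zpow_one]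
    rw [hm, xiIter, if_neg (Int.not_even_iff_odd.mpr ⟨k, hk⟩)]
    exact xiPerm_apply x

/-- The `j`-th summand of `xcoord`. -/
noncomputable def pt (n i : ℕ) (t : ℕ → ℕ) (j : ℕ) : ℝ :=
  xiIter (S n i j t) ((t (i + j * n) : ℝ)) / 3 ^ (j + 1)

lemma xcoord_eq (n i : ℕ) (t : ℕ → ℕ) : xcoord n i t = ∑' j, pt n i t j :=
  tsum_congr fun j => by rw [pt, xiPerm_zpow]

lemma xiIter_nonneg (m : ℤ) {x : ℝ} (h0 : 0 ≤ x) (h2 : x ≤ 2) : 0 ≤ xiIter m x := by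
  unfold xiIter; split <;> linarith

lemma xiIter_le_two (m : ℤ) {x : ℝ} (h0 : 0 ≤ x) (h2 : x ≤ 2) : xiIter m x ≤ 2 := by
  unfold xiIter; split <;> linarith

lemma digit_cast_mem {t : ℕ → ℕ} (ht : IsDigitSeq t) (k : ℕ) :
    (0 : ℝ) ≤ (t k : ℝ) ∧ (t k : ℝ) ≤ 2 := by
  constructor
  · positivity
  · exact_mod_cast ht k

lemma pt_nonneg (n i : ℕ) {t : ℕ → ℕ} (ht : IsDigitSeq t) (j : ℕ) : 0 ≤ pt n i t j := by
  have h := digit_cast_mem ht (i + j * n)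
  unfold pt
  have := xiIter_nonneg (S n i j t) h.1 h.2
  positivity

lemma pt_le (n i : ℕ) {t : ℕ → ℕ} (ht : IsDigitSeq t) (j : ℕ) :
    pt n i t j ≤ 2 / 3 ^ (j + 1) := by
  have h := digit_cast_mem ht (i + j * n)
  have h2 := xiIter_le_two (S n i j t) h.1 h.2
  unfold pt
  apply div_le_div_of_nonneg_right h2 (by positivity) |>.trans_eq rfl

lemma summable_geom_aux (c : ℝ) : Summable (fun j : ℕ => c / 3 ^ (j + 1)) := by
  have h : (fun j : ℕ => c / 3 ^ (j + 1)) = fun j : ℕ => (c / 3) * (1 / 3 : ℝ) ^ j := by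
    funext j
    rw [pow_succ, one_div, inv_pow]
    field_simp
  rw [h]
  exact (summable_geometric_of_lt_one (by norm_num) (by norm_num)).mul_left _

lemma summable_pt {n i : ℕ} {t : ℕ → ℕ} (ht : IsDigitSeq t) : Summable (pt n i t) :=
  Summable.of_nonneg_of_le (pt_nonneg n i ht) (pt_le n i ht) (summable_geom_aux 2)

lemma summable_ite_tail (J : ℕ) (c : ℝ) :
    Summable (fun j : ℕ => if j < J then (0 : ℝ) else c / 3 ^ (j + 1)) := by
  apply Summable.of_norm_bounded (summable_geom_aux |c|)
  intro j
  split
  · rw [norm_zero]; positivity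
  · rw [Real.norm_eq_abs, abs_div, abs_of_pos (by positivity : (0:ℝ) < 3 ^ (j+1))]

lemma tsum_tail (J : ℕ) (c : ℝ) :
    ∑' j : ℕ, (if j < J then (0 : ℝ) else c / 3 ^ (j + 1)) = c / 2 / 3 ^ J := by
  rw [← Summable.sum_add_tsum_nat_add J (summable_ite_tail J c)]
  have h1 : ∑ j ∈ Finset.range J, (if j < J then (0:ℝ) else c / 3 ^ (j + 1)) = 0 :=
    Finset.sum_eq_zero fun j hj => if_pos (Finset.mem_range.mp hj)
  have h2 : ∀ k : ℕ, (if k + J < J then (0:ℝ) else c / 3 ^ (k + J + 1))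
      = (c / 3 ^ (J + 1)) * (1 / 3 : ℝ) ^ k := by
    intro k
    rw [if_neg (by omega), show k + J + 1 = (J + 1) + k by ring, pow_add]
    field_simp
    rw [mul_assoc, ← mul_pow]
    norm_num
  rw [h1, zero_add, tsum_congr h2, tsum_mul_left,
    tsum_geometric_of_lt_one (by norm_num) (by norm_num), pow_succ]
  norm_num
  ring

lemma S_congr {n i : ℕ} (j : ℕ) (hi : 1 ≤ i) {a b : ℕ → ℕ}
    (h : ∀ k, 1 ≤ k → k ≤ i + j * n → a k = b k) : S n i j a = S n i j b := by
  unfold S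
  congr 1
  · apply Finset.sum_congr rfl
    intro k hk
    rw [Finset.mem_Icc] at hk
    rw [h k hk.1 hk.2]
  · apply Finset.sum_congr rfl
    intro s hs
    rw [Finset.mem_range] at hs
    rw [h (i + s * n) (le_trans hi (Nat.le_add_right _ _))
      (Nat.add_le_add_left (Nat.mul_le_mul_right n (by omega)) i)]

lemma tail_bound (n i J : ℕ) (hi1 : 1 ≤ i) (hin : i ≤ n) {a b : ℕ → ℕ}
    (ha : IsDigitSeq a) (hb : IsDigitSeq b)
    (hab : ∀ k, 1 ≤ k → k ≤ J * n → a k = b k) :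
    |xcoord n i a - xcoord n i b| ≤ 1 / 3 ^ J := by
  rw [xcoord_eq, xcoord_eq, ← Summable.tsum_sub (summable_pt ha) (summable_pt hb)]
  have key : ∀ j, |pt n i a j - pt n i b j| ≤ (if j < J then (0:ℝ) else 2 / 3 ^ (j + 1)) := by
    intro j
    split
    case isTrue hj =>
      have hle : i + j * n ≤ J * n := by
        calc i + j * n ≤ n + j * n := by omega
        _ = (j + 1) * n := by ring
        _ ≤ J * n := Nat.mul_le_mul_right n (by omega)
      have hpt : pt n i a j = pt n i b j := by
        unfold pt
        rw [S_congr j hi1 (fun k hk1 hk2 => hab k hk1 (le_trans hk2 hle)),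
          hab _ (le_trans hi1 (Nat.le_add_right _ _)) hle]
      rw [hpt, sub_self, abs_zero]
    case isFalse hj =>
      rw [abs_sub_le_iff]
      constructor
      · linarith [pt_le n i ha j, pt_nonneg n i hb j]
      · linarith [pt_le n i hb j, pt_nonneg n i ha j]
  have habs : Summable fun j => |pt n i a j - pt n i b j| :=
    ((summable_pt ha).sub (summable_pt hb)).abs
  have h0 : Summable fun j => ‖pt n i a j - pt n i b j‖ := by
    simpa only [Real.norm_eq_abs] using habs
  have h1 := norm_tsum_le_tsum_norm h0
  simp only [Real.norm_eq_abs] at h1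
  have h2 : ∑' j, |pt n i a j - pt n i b j|
      ≤ ∑' j, (if j < J then (0:ℝ) else 2 / 3 ^ (j + 1)) :=
    Summable.tsum_le_tsum key habs (summable_ite_tail J 2)
  have h3 : ∑' j : ℕ, (if j < J then (0:ℝ) else 2 / 3 ^ (j + 1)) = 1 / 3 ^ J := by
    rw [tsum_tail]; norm_num
  linarith


/-! ### Well-definedness at ternary rationals -/

lemma Icc1_eq_Ioc (L : ℕ) : Finset.Icc 1 L = Finset.Ioc 0 L := Finset.Icc_add_one_left_eq_Ioc 0 L

/-- The "all twos" rewriting of a digit sequence ending in `… d 0 0 0 …`. -/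
def lowSeq (a : ℕ → ℕ) (N : ℕ) : ℕ → ℕ :=
  fun k => if k < N then a k else if k = N then a N - 1 else 2

lemma lowSeq_isDigitSeq {a : ℕ → ℕ} (ha : IsDigitSeq a) (N : ℕ) :
    IsDigitSeq (lowSeq a N) := by
  intro k
  unfold lowSeq
  split
  · exact ha k
  split
  · exact le_trans (Nat.sub_le _ _) (ha N)
  · exact le_rfl

lemma xiIter_parity {m m' : ℤ} (h : Even m ↔ Even m') (x : ℝ) :
    xiIter m x = xiIter m' x := by
  unfold xiIter
  by_cases he : Even m
  · rw [if_pos he, if_pos (h.mp he)]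
  · rw [if_neg he, if_neg (fun h' => he (h.mpr h'))]

lemma xiIter_opp {m m' : ℤ} (h : ¬(Even m ↔ Even m')) :
    xiIter m' 2 = xiIter m 0 := by
  unfold xiIter
  by_cases he : Even m
  · rw [if_pos he, if_neg (fun h' => h ⟨fun _ => h', fun _ => he⟩)]
    norm_num
  · rw [if_neg he]
    rw [if_pos (by by_contra h'; exact h ⟨fun hh => absurd hh he, fun hh => absurd hh h'⟩)]
    norm_num

lemma xiIter_two_diff (m : ℤ) (d : ℝ) :
    xiIter m 0 - xiIter m 2 = -2 * (xiIter m d - xiIter m (d - 1)) := by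
  unfold xiIter
  split <;> ring

lemma welldef (n i N : ℕ) (hi1 : 1 ≤ i) (hin : i ≤ n) (hN : 1 ≤ N)
    {a : ℕ → ℕ} (ha : IsDigitSeq a) (haN : 1 ≤ a N) (ha0 : ∀ k, N < k → a k = 0) :
    xcoord n i a = xcoord n i (lowSeq a N) := by
  have hn1 : 1 ≤ n := le_trans hi1 hin
  set b := lowSeq a N with hbdef
  have hbd : IsDigitSeq b := lowSeq_isDigitSeq ha N
  have hbeqlow : ∀ k, k < N → b k = a k := fun k hk => if_pos hk
  have hbN : b N = a N - 1 := by
    show (if N < N then a N else if N = N then a N - 1 else 2) = a N - 1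
    rw [if_neg (lt_irrefl N), if_pos rfl]
  have hbhigh : ∀ k, N < k → b k = 2 := by
    intro k hk
    show (if k < N then a k else if k = N then a N - 1 else 2) = 2
    rw [if_neg (by omega), if_neg (by omega)]
  -- the threshold index j0
  have hex : ∃ j, N ≤ i + j * n := ⟨N, by calc N ≤ N * n := Nat.le_mul_of_pos_right N (by omega)
    _ ≤ i + N * n := Nat.le_add_left _ _⟩
  set j0 := Nat.find hex with hj0def
  have hj0 : N ≤ i + j0 * n := Nat.find_spec hex
  have hj0min : ∀ j, j < j0 → i + j * n < N := fun j hj => by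
    have := Nat.find_min hex hj
    omega
  have hmono : ∀ j, j0 < j → N < i + j * n := by
    intro j hj
    have : i + j0 * n + n ≤ i + j * n := by
      have : j0 + 1 ≤ j := hj
      calc i + j0 * n + n = i + (j0 + 1) * n := by ring
        _ ≤ i + j * n := Nat.add_le_add_left (Nat.mul_le_mul_right n this) i
    omega
  -- terms below j0 agree
  have hsmall : ∀ j, j < j0 → pt n i a j = pt n i b j := by
    intro j hj
    have hlt := hj0min j hj
    have hagree : ∀ k, 1 ≤ k → k ≤ i + j * n → a k = b k := by
      intro k _ hk
      exact (hbeqlow k (lt_of_le_of_lt hk hlt)).symm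
    unfold pt
    rw [S_congr j hi1 hagree, hagree _ (le_trans hi1 (Nat.le_add_right _ _)) le_rfl]
  -- difference of the Icc-sums
  have hIcc : ∀ L, N ≤ L →
      (∑ k ∈ Finset.Icc 1 L, ((b k : ℤ) - (a k : ℤ))) = 2 * ((L : ℤ) - N) - 1 := by
    intro L hL
    rw [Icc1_eq_Ioc, ← Finset.sum_Ioc_consecutive _ (Nat.zero_le N) hL]
    have e1 : ∑ k ∈ Finset.Ioc 0 N, ((b k : ℤ) - (a k : ℤ)) = -1 := by
      rw [Finset.sum_eq_single_of_mem N (Finset.mem_Ioc.mpr ⟨by omega, le_rfl⟩)]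
      · rw [hbN, Nat.cast_sub haN]
        push_cast
        ring
      · intro k hk hne
        rw [Finset.mem_Ioc] at hk
        rw [hbeqlow k (lt_of_le_of_ne hk.2 hne)]
        ring
    have e2 : ∑ k ∈ Finset.Ioc N L, ((b k : ℤ) - (a k : ℤ)) = 2 * ((L : ℤ) - N) := by
      have hc : ∀ k ∈ Finset.Ioc N L, ((b k : ℤ) - (a k : ℤ)) = 2 := by
        intro k hk
        rw [Finset.mem_Ioc] at hk
        rw [hbhigh k hk.1, ha0 k hk.1]
        norm_num
      rw [Finset.sum_congr rfl hc, Finset.sum_const, Nat.card_Ioc, nsmul_eq_mul,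
        Nat.cast_sub hL]
      ring
    rw [e1, e2]
    ring
  -- difference of the range-sums, j ≥ j0
  have hRange : ∀ j, j0 ≤ j →
      (∑ s ∈ Finset.range (j + 1), ((b (i + s * n) : ℤ) - (a (i + s * n) : ℤ)))
      = if i + j0 * n = N then 2 * ((j : ℤ) - j0) - 1 else 2 * ((j : ℤ) + 1 - j0) := by
    intro j hj
    rw [Finset.range_eq_Ico, ← Finset.sum_Ico_consecutive _ (Nat.zero_le j0) (by omega)]
    have e1 : ∑ s ∈ Finset.Ico 0 j0, ((b (i + s * n) : ℤ) - (a (i + s * n) : ℤ)) = 0 := by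
      apply Finset.sum_eq_zero
      intro s hs
      rw [Finset.mem_Ico] at hs
      rw [hbeqlow _ (hj0min s hs.2)]
      ring
    rw [e1, zero_add]
    by_cases heq : i + j0 * n = N
    · rw [if_pos heq, Finset.sum_eq_sum_Ico_succ_bot (by omega)]
      have e2 : ∑ s ∈ Finset.Ico (j0 + 1) (j + 1),
          ((b (i + s * n) : ℤ) - (a (i + s * n) : ℤ)) = 2 * ((j : ℤ) - j0) := by
        have hc : ∀ s ∈ Finset.Ico (j0 + 1) (j + 1),
            ((b (i + s * n) : ℤ) - (a (i + s * n) : ℤ)) = 2 := by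
          intro s hs
          rw [Finset.mem_Ico] at hs
          have hgt : N < i + s * n := hmono s (by omega)
          rw [hbhigh _ hgt, ha0 _ hgt]
          norm_num
        rw [Finset.sum_congr rfl hc, Finset.sum_const, Nat.card_Ico, nsmul_eq_mul]
        have : ((j + 1 - (j0 + 1) : ℕ) : ℤ) = (j : ℤ) - j0 := by omega
        rw [this]
        ring
      rw [e2, heq, hbN, Nat.cast_sub haN]
      push_cast
      ring
    · rw [if_neg heq]
      have hgt0 : N < i + j0 * n := by omega
      have hc : ∀ s ∈ Finset.Ico j0 (j + 1),
          ((b (i + s * n) : ℤ) - (a (i + s * n) : ℤ)) = 2 := by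
        intro s hs
        rw [Finset.mem_Ico] at hs
        have hgt : N < i + s * n := by
          rcases Nat.eq_or_lt_of_le hs.1 with h | h
          · exact h ▸ hgt0
          · exact hmono s h
        rw [hbhigh _ hgt, ha0 _ hgt]
        norm_num
      rw [Finset.sum_congr rfl hc, Finset.sum_const, Nat.card_Ico, nsmul_eq_mul]
      have : ((j + 1 - j0 : ℕ) : ℤ) = (j : ℤ) + 1 - j0 := by omega
      rw [this]
      ring
  -- S difference for j ≥ j0
  have hSdiff : ∀ j, j0 ≤ j → S n i j b - S n i j a
      = (2 * ((i + j * n : ℕ) : ℤ) - 2 * N - 1)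
        - (if i + j0 * n = N then 2 * ((j : ℤ) - j0) - 1 else 2 * ((j : ℤ) + 1 - j0)) := by
    intro j hj
    have hNle : N ≤ i + j * n := le_trans hj0 (by
      exact Nat.add_le_add_left (Nat.mul_le_mul_right n hj) i)
    have h1 := hIcc (i + j * n) hNle
    have h2 := hRange j hj
    unfold S
    rw [Finset.sum_sub_distrib] at h1 h2
    push_cast at h1 ⊢
    linarith [h1, h2]
  by_cases heps : i + j0 * n = N
  · -- S a is constant for j ≥ j0
    have hSa : ∀ j, j0 ≤ j → S n i j a = S n i j0 a := by
      intro j hj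
      unfold S
      have hIa : (∑ k ∈ Finset.Icc 1 (i + j * n), ((a k : ℤ)))
          = ∑ k ∈ Finset.Icc 1 (i + j0 * n), ((a k : ℤ)) := by
        rw [Icc1_eq_Ioc, Icc1_eq_Ioc, ← Finset.sum_Ioc_consecutive _ (Nat.zero_le (i + j0 * n))
          (Nat.add_le_add_left (Nat.mul_le_mul_right n hj) i)]
        have hz : ∑ k ∈ Finset.Ioc (i + j0 * n) (i + j * n), ((a k : ℤ)) = 0 :=
          Finset.sum_eq_zero fun k hk => by
            rw [Finset.mem_Ioc] at hk
            rw [ha0 k (by omega)]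
            norm_num
        rw [hz, add_zero]
      have hRa : (∑ s ∈ Finset.range (j + 1), ((a (i + s * n) : ℤ)))
          = ∑ s ∈ Finset.range (j0 + 1), ((a (i + s * n) : ℤ)) := by
        rw [Finset.range_eq_Ico,
          ← Finset.sum_Ico_consecutive _ (Nat.zero_le (j0 + 1)) (by omega)]
        have hz : ∑ s ∈ Finset.Ico (j0 + 1) (j + 1), ((a (i + s * n) : ℤ)) = 0 :=
          Finset.sum_eq_zero fun s hs => by
            rw [Finset.mem_Ico] at hs
            rw [ha0 _ (hmono s (by omega))]
            norm_num
        rw [hz, add_zero, Finset.range_eq_Ico]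
      rw [hIa, hRa]
    have hpar : ∀ j, j0 ≤ j → (Even (S n i j b) ↔ Even (S n i j0 a)) := by
      intro j hj
      have h1 := hSdiff j hj
      rw [if_pos heps] at h1
      have h2 := hSa j hj
      have hev : Even (S n i j b - S n i j0 a) := by
        rw [show S n i j b - S n i j0 a
            = (S n i j b - S n i j a) + (S n i j a - S n i j0 a) by ring, h1, h2, sub_self,
          add_zero]
        exact ⟨((i + j * n : ℕ) : ℤ) - N - ((j : ℤ) - j0), by ring⟩
      exact Int.even_sub.mp hev
    set σ := S n i j0 a with hσ
    set c0 := xiIter σ ((a N : ℝ)) - xiIter σ ((a N : ℝ) - 1) with hc0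
    have h2d : xiIter σ 0 - xiIter σ 2 = -2 * c0 := by
      rw [hc0]; exact xiIter_two_diff σ _
    have hDfun : ∀ j, pt n i a j - pt n i b j
        = (if j = j0 then c0 / 3 ^ (j0 + 1) else 0)
          + (if j < j0 + 1 then 0 else (-2 * c0) / 3 ^ (j + 1)) := by
      intro j
      rcases lt_trichotomy j j0 with h | h | h
      · rw [if_neg (by omega), if_pos (by omega), hsmall j h, sub_self, add_zero]
      · rw [if_pos h, if_pos (by omega), add_zero]
        have heq' : i + j * n = N := by rw [h]; exact heps
        have hSj : S n i j a = σ := by rw [h, hσ]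
        have hSjb : Even (S n i j b) ↔ Even σ := hpar j (by omega)
        unfold pt
        rw [heq', hbN, Nat.cast_sub haN, Nat.cast_one, xiIter_parity hSjb, hSj, h,
          div_sub_div_same, ← hc0]
      · rw [if_neg (by omega), if_neg (by omega), zero_add]
        have hgt : N < i + j * n := hmono j h
        unfold pt
        have hSjb : Even (S n i j b) ↔ Even σ := hpar j (le_of_lt h)
        have hSj : S n i j a = σ := hSa j (le_of_lt h)
        rw [ha0 _ hgt, hbhigh _ hgt, hSj, xiIter_parity hSjb]
        push_cast
        rw [div_sub_div_same, h2d]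
    have hsum1 : Summable (fun j : ℕ => if j = j0 then c0 / 3 ^ (j0 + 1) else (0 : ℝ)) :=
      summable_of_ne_finset_zero (s := {j0}) (fun j hj => if_neg (by simpa using hj))
    have hsum2 := summable_ite_tail (j0 + 1) (-2 * c0)
    have hzero : xcoord n i a - xcoord n i b = 0 := by
      rw [xcoord_eq, xcoord_eq, ← Summable.tsum_sub (summable_pt ha) (summable_pt hbd),
        tsum_congr hDfun, Summable.tsum_add hsum1 hsum2, tsum_ite_eq j0 _, tsum_tail]
      ring
    exact sub_eq_zero.mp hzero
  · -- off-grid case: terms are equal one by one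
    have hgt0 : N < i + j0 * n := by omega
    have hterm : ∀ j, pt n i a j = pt n i b j := by
      intro j
      rcases lt_or_ge j j0 with h | h
      · exact hsmall j h
      · have hgt : N < i + j * n := by
          rcases Nat.eq_or_lt_of_le h with h' | h'
          · exact h' ▸ hgt0
          · exact hmono j h'
        have hodd : ¬(Even (S n i j b) ↔ Even (S n i j a)) := by
          have h1 := hSdiff j h
          rw [if_neg heps] at h1
          intro hiff
          have hev : Even (S n i j b - S n i j a) := Int.even_sub.mpr hiff
          rw [h1] at hev
          rcases hev with ⟨r, hr⟩
          omega
        unfold pt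
        rw [ha0 _ hgt, hbhigh _ hgt]
        push_cast
        rw [xiIter_opp (fun hiff => hodd hiff.symm)]
    rw [xcoord_eq, xcoord_eq]
    exact tsum_congr hterm


/-! ### The canonical ternary digits -/

lemma ternaryDigit_isDigitSeq (t : ℝ) : IsDigitSeq (ternaryDigit t) := by
  intro k
  unfold ternaryDigit
  split
  · exact le_rfl
  · omega

lemma ternaryDigit_one (k : ℕ) : ternaryDigit 1 k = 2 := if_pos rfl

lemma ternaryDigit_eq {t : ℝ} (_ht0 : 0 ≤ t) (ht1 : t < 1) {k M : ℕ} (hk : k ≤ M) :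
    ternaryDigit t k = ⌊t * 3 ^ M⌋₊ / 3 ^ (M - k) % 3 := by
  unfold ternaryDigit
  rw [if_neg (ne_of_lt ht1), Int.floor_toNat]
  congr 1
  have h3 : (3 : ℝ) ^ M = 3 ^ k * 3 ^ (M - k) := by
    rw [← pow_add]
    congr 1
    omega
  have he : t * 3 ^ k = t * 3 ^ M / ((3 ^ (M - k) : ℕ) : ℝ) := by
    push_cast
    rw [h3]
    have h0 : ((3 : ℝ) ^ (M - k)) ≠ 0 := by positivity
    field_simp
  rw [he, Nat.floor_div_natCast]

lemma pred_div_le {q e r : ℕ} (h1 : 1 ≤ q) (hre : r ≤ e) :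
    (3 ^ e * q - 1) / 3 ^ r = 3 ^ (e - r) * q - 1 := by
  have hd : (3 : ℕ) ^ r ∣ 3 ^ e * q := Dvd.dvd.mul_right (pow_dvd_pow 3 hre) q
  have hpos : 1 ≤ 3 ^ e * q := Nat.mul_pos (Nat.pow_pos (by norm_num)) h1
  have hs := Nat.succ_div (a := 3 ^ e * q - 1) (b := 3 ^ r)
  rw [Nat.sub_add_cancel hpos, if_pos hd] at hs
  have hdiv : 3 ^ e * q / 3 ^ r = 3 ^ (e - r) * q := by
    rw [show (3 : ℕ) ^ e = 3 ^ r * 3 ^ (e - r) by rw [← pow_add]; congr 1; omega,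
      mul_assoc, Nat.mul_div_cancel_left _ (by positivity)]
  have hkey : (3 ^ e * q - 1) / 3 ^ r + 1 = 3 ^ (e - r) * q := by rw [← hs, hdiv]
  exact Nat.eq_sub_of_add_eq hkey

lemma pred_div_gt {q e r : ℕ} (hq : ¬3 ∣ q) (hre : e < r) :
    (3 ^ e * q - 1) / 3 ^ r = 3 ^ e * q / 3 ^ r := by
  have hq1 : 1 ≤ q := by
    rcases Nat.eq_zero_or_pos q with h | h
    · exact absurd (h ▸ dvd_zero 3) hq
    · exact h
  have hnd : ¬(3 : ℕ) ^ r ∣ 3 ^ e * q := by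
    intro hd
    apply hq
    have h1 : (3 : ℕ) ^ (e + 1) ∣ 3 ^ e * q := dvd_trans (pow_dvd_pow 3 (by omega)) hd
    rw [pow_succ] at h1
    exact (Nat.mul_dvd_mul_iff_left (show 0 < (3:ℕ)^e by positivity)).mp h1
  have hpos : 1 ≤ 3 ^ e * q := Nat.mul_pos (Nat.pow_pos (by norm_num)) hq1
  have hs := Nat.succ_div (a := 3 ^ e * q - 1) (b := 3 ^ r)
  rw [Nat.sub_add_cancel hpos, if_neg hnd] at hs
  rw [add_zero] at hs
  exact hs.symm

/-! ### The modulus-of-continuity bound -/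

lemma close_bound (n i : ℕ) (hi1 : 1 ≤ i) (hin : i ≤ n) (J : ℕ)
    {t t' : ℝ} (ht : t ∈ Set.Icc (0 : ℝ) 1) (ht' : t' ∈ Set.Icc (0 : ℝ) 1)
    (hle : t ≤ t') (hclose : t' - t ≤ 1 / 3 ^ (J * n)) :
    |peanoCoord n i t - peanoCoord n i t'| ≤ 2 / 3 ^ J := by
  set M := J * n with hM
  by_cases ht'1 : t' = 1
  · subst ht'1
    by_cases ht1 : t = 1
    · subst ht1
      rw [sub_self, abs_zero]
      positivity
    · have htlt : t < 1 := lt_of_le_of_ne ht.2 ht1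
      have hd : ∀ k, 1 ≤ k → k ≤ M → ternaryDigit t k = ternaryDigit 1 k := by
        intro k h1k hkM
        rw [ternaryDigit_one]
        unfold ternaryDigit
        rw [if_neg ht1, Int.floor_toNat]
        have hfl : ⌊t * 3 ^ k⌋₊ = 3 ^ k - 1 := by
          have h1 : ((3 ^ k - 1 : ℕ) : ℝ) = (3 : ℝ) ^ k - 1 := by
            rw [Nat.cast_sub (Nat.pow_pos (by norm_num : 0 < 3))]
            push_cast
            ring
          rw [Nat.floor_eq_iff (mul_nonneg ht.1 (by positivity))]
          have h3k : (0 : ℝ) < 3 ^ k := by positivity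
          have h3le : (3 : ℝ) ^ k ≤ 3 ^ M := pow_le_pow_right₀ (by norm_num) hkM
          have hlb : 1 - 1 / 3 ^ M ≤ t := by linarith [hclose]
          have h3M : (0 : ℝ) < 3 ^ M := by positivity
          constructor
          · rw [h1]
            have hq : (1 / (3 : ℝ) ^ M) * 3 ^ k ≤ 1 := by
              rw [div_mul_eq_mul_div, one_mul, div_le_one h3M]
              exact h3le
            have hkey : (3 : ℝ) ^ k - 1 ≤ (1 - 1 / 3 ^ M) * 3 ^ k := by nlinarith [hq]
            have hmul : (1 - 1 / 3 ^ M) * 3 ^ k ≤ t * 3 ^ k :=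
              mul_le_mul_of_nonneg_right hlb (le_of_lt h3k)
            linarith
          · rw [h1]
            have : t * 3 ^ k < 1 * 3 ^ k := mul_lt_mul_of_pos_right htlt h3k
            linarith
        rw [hfl]
        have h3d : (3 : ℕ) ∣ 3 ^ k := dvd_pow_self 3 (by omega)
        have h3le : 3 ≤ 3 ^ k := by
          calc (3:ℕ) = 3 ^ 1 := (pow_one 3).symm
          _ ≤ 3 ^ k := Nat.pow_le_pow_right (by norm_num) h1k
        omega
      have := tail_bound n i J hi1 hin (ternaryDigit_isDigitSeq t)
        (ternaryDigit_isDigitSeq 1) hd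
      calc |peanoCoord n i t - peanoCoord n i 1| ≤ 1 / 3 ^ J := this
        _ ≤ 2 / 3 ^ J := by gcongr <;> norm_num
  · have ht'lt : t' < 1 := lt_of_le_of_ne ht'.2 ht'1
    have htlt : t < 1 := lt_of_le_of_lt hle ht'lt
    set m' := ⌊t' * 3 ^ M⌋₊ with hm'def
    set m := ⌊t * 3 ^ M⌋₊ with hmdef
    have h3M : (0 : ℝ) < 3 ^ M := by positivity
    have hmm' : m ≤ m' := Nat.floor_le_floor (mul_le_mul_of_nonneg_right hle (le_of_lt h3M))
    have hm'le : m' ≤ m + 1 := by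
      have h2 : (t' - t) * 3 ^ M ≤ (1 / 3 ^ M) * 3 ^ M :=
        mul_le_mul_of_nonneg_right hclose (le_of_lt h3M)
      rw [one_div_mul_cancel (ne_of_gt h3M)] at h2
      have h1 : t' * 3 ^ M ≤ t * 3 ^ M + 1 := by nlinarith [h2]
      calc m' ≤ ⌊t * 3 ^ M + 1⌋₊ := Nat.floor_le_floor h1
        _ = m + 1 := by rw [Nat.floor_add_one (mul_nonneg ht.1 (le_of_lt h3M))]
    have hm'lt : m' < 3 ^ M := by
      rw [hm'def, Nat.floor_lt (mul_nonneg ht'.1 (le_of_lt h3M))]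
      push_cast
      nlinarith [h3M, ht'lt]
    have hdig' : ∀ k, k ≤ M → ternaryDigit t' k = m' / 3 ^ (M - k) % 3 :=
      fun k hk => ternaryDigit_eq ht'.1 ht'lt hk
    have hdig : ∀ k, k ≤ M → ternaryDigit t k = m / 3 ^ (M - k) % 3 :=
      fun k hk => ternaryDigit_eq ht.1 htlt hk
    rcases Nat.eq_or_lt_of_le hmm' with he | hlt2
    · have hag : ∀ k, 1 ≤ k → k ≤ M → ternaryDigit t k = ternaryDigit t' k := by
        intro k _ hk
        rw [hdig k hk, hdig' k hk, he]
      have := tail_bound n i J hi1 hin (ternaryDigit_isDigitSeq t)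
        (ternaryDigit_isDigitSeq t') hag
      calc |peanoCoord n i t - peanoCoord n i t'| ≤ 1 / 3 ^ J := this
        _ ≤ 2 / 3 ^ J := by gcongr <;> norm_num
    · have hm'v : m' = m + 1 := by omega
      obtain ⟨e, q, hq, hqe⟩ := Nat.exists_eq_pow_mul_and_not_dvd
        (show m' ≠ 0 by omega) 3 (by norm_num)
      have hq1 : 1 ≤ q := by
        rcases Nat.eq_zero_or_pos q with h | h
        · exact absurd (h ▸ dvd_zero 3) hq
        · exact h
      have heM : e < M := by
        have h1 : 3 ^ e ≤ m' := by
          rw [hqe]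
          exact Nat.le_mul_of_pos_right _ hq1
        have h2 : (3 : ℕ) ^ e < 3 ^ M := lt_of_le_of_lt h1 hm'lt
        exact (Nat.pow_lt_pow_iff_right (by norm_num)).mp h2
      set N := M - e with hNdef
      have hN1 : 1 ≤ N := by omega
      have hNM : N ≤ M := by omega
      have hMN : M - N = e := by omega
      set A : ℕ → ℕ := fun k => if k ≤ M then m' / 3 ^ (M - k) % 3 else 0 with hA
      have hAds : IsDigitSeq A := by
        intro k
        simp only [hA]
        split
        · omega
        · omega
      have hq3 : m' / 3 ^ e = q := by
        rw [hqe, Nat.mul_div_cancel_left _ (Nat.pow_pos (by norm_num))]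
      have hAN1 : 1 ≤ A N := by
        simp only [hA, if_pos hNM, hMN, hq3]
        omega
      have hA0 : ∀ k, N < k → A k = 0 := by
        intro k hk
        simp only [hA]
        split
        case isTrue hkM =>
          have hr : M - k < e := by omega
          have hstep : m' / 3 ^ (M - k) = 3 ^ (e - (M - k)) * q := by
            rw [hqe, show (3 : ℕ) ^ e = 3 ^ (M - k) * 3 ^ (e - (M - k)) by
              rw [← pow_add]; congr 1; omega, mul_assoc,
              Nat.mul_div_cancel_left _ (Nat.pow_pos (by norm_num))]
          rw [hstep]
          have h3d : (3 : ℕ) ∣ 3 ^ (e - (M - k)) * q :=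
            Dvd.dvd.mul_right (dvd_pow_self 3 (by omega)) q
          omega
        · rfl
      have hagA : ∀ k, 1 ≤ k → k ≤ M → A k = ternaryDigit t' k := by
        intro k _ hk
        rw [hdig' k hk]
        simp only [hA, if_pos hk]
      have hmval : m = 3 ^ e * q - 1 := by omega
      have hagB : ∀ k, 1 ≤ k → k ≤ M → ternaryDigit t k = lowSeq A N k := by
        intro k _ hk
        rw [hdig k hk]
        rcases lt_trichotomy k N with h | h | h
        · have hre : e < M - k := by omega
          rw [show lowSeq A N k = A k from if_pos h]
          simp only [hA, if_pos hk]
          rw [hmval, pred_div_gt hq hre, hqe]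
        · rw [show lowSeq A N k = A N - 1 from by
            unfold lowSeq; rw [if_neg (by omega), if_pos h]]
          simp only [hA, if_pos hNM, hMN, hq3]
          rw [hmval, show M - k = e from by omega, pred_div_le hq1 le_rfl,
            Nat.sub_self, pow_zero, one_mul]
          omega
        · have hre : M - k < e := by omega
          rw [show lowSeq A N k = 2 from by
            unfold lowSeq; rw [if_neg (by omega), if_neg (by omega)]]
          rw [hmval, pred_div_le hq1 (le_of_lt hre)]
          have h3d : (3 : ℕ) ∣ 3 ^ (e - (M - k)) * q :=
            Dvd.dvd.mul_right (dvd_pow_self 3 (by omega)) q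
          have hge1 : 1 ≤ 3 ^ (e - (M - k)) * q :=
            Nat.mul_pos (Nat.pow_pos (by norm_num)) hq1
          omega
      have h1 : |xcoord n i (ternaryDigit t) - xcoord n i (lowSeq A N)| ≤ 1 / 3 ^ J :=
        tail_bound n i J hi1 hin (ternaryDigit_isDigitSeq t) (lowSeq_isDigitSeq hAds N) hagB
      have h2 : xcoord n i A = xcoord n i (lowSeq A N) :=
        welldef n i N hi1 hin hN1 hAds hAN1 hA0
      have h3 : |xcoord n i A - xcoord n i (ternaryDigit t')| ≤ 1 / 3 ^ J :=
        tail_bound n i J hi1 hin hAds (ternaryDigit_isDigitSeq t') hagA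
      rw [← h2] at h1
      have htri : |peanoCoord n i t - peanoCoord n i t'|
          ≤ |xcoord n i (ternaryDigit t) - xcoord n i A|
            + |xcoord n i A - xcoord n i (ternaryDigit t')| := by
        unfold peanoCoord
        exact abs_sub_le _ _ _
      have h4 : (1 : ℝ) / 3 ^ J + 1 / 3 ^ J = 2 / 3 ^ J := by ring
      linarith


/-- each `x_i` is `(1/n)`-Hölder continuous on `[0,1]`. -/
theorem peanoCoord_holder (n i : ℕ) (hn : 2 ≤ n) (hi1 : 1 ≤ i) (hin : i ≤ n) :
    ∃ lam : ℝ, 0 < lam ∧ ∀ t ∈ Set.Icc (0 : ℝ) 1, ∀ t' ∈ Set.Icc (0 : ℝ) 1,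
      |peanoCoord n i t - peanoCoord n i t'| ≤ lam * |t - t'| ^ ((1 : ℝ) / n) := by
  refine ⟨6, by norm_num, ?_⟩
  intro t ht t' ht'
  by_cases hteq : t = t'
  · subst hteq
    rw [sub_self, abs_zero]
    positivity
  · have hδpos : 0 < |t - t'| := abs_pos.mpr (sub_ne_zero.mpr hteq)
    have hδle : |t - t'| ≤ 1 := by
      rw [abs_sub_le_iff]
      constructor <;> linarith [ht.1, ht.2, ht'.1, ht'.2]
    have hex : ∃ J : ℕ, (1 : ℝ) / 3 ^ ((J + 1) * n) < |t - t'| := by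
      obtain ⟨K, hK⟩ := exists_pow_lt_of_lt_one hδpos (by norm_num : (1 / 3 : ℝ) < 1)
      refine ⟨K, ?_⟩
      have hKle : K ≤ (K + 1) * n := by
        calc K ≤ K + 1 := Nat.le_succ K
          _ ≤ (K + 1) * n := Nat.le_mul_of_pos_right _ (by omega)
      calc (1 : ℝ) / 3 ^ ((K + 1) * n) = (1 / 3 : ℝ) ^ ((K + 1) * n) := by
            rw [one_div_pow]
        _ ≤ (1 / 3 : ℝ) ^ K := pow_le_pow_of_le_one (by norm_num) (by norm_num) hKle
        _ < |t - t'| := hK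
    set J := Nat.find hex with hJdef
    have hJ1 : (1 : ℝ) / 3 ^ ((J + 1) * n) < |t - t'| := Nat.find_spec hex
    have hJ2 : |t - t'| ≤ 1 / 3 ^ (J * n) := by
      rcases Nat.eq_zero_or_pos J with h0 | hpos
      · rw [h0]
        norm_num
        exact hδle
      · have hmin := Nat.find_min hex (show J - 1 < J by omega)
        push_neg at hmin
        rwa [show J - 1 + 1 = J by omega] at hmin
    have hcb : |peanoCoord n i t - peanoCoord n i t'| ≤ 2 / 3 ^ J := by
      rcases le_total t t' with h | h
      · have hc : t' - t ≤ 1 / 3 ^ (J * n) := by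
          rw [abs_sub_comm, abs_of_nonneg (by linarith)] at hJ2
          exact hJ2
        exact close_bound n i hi1 hin J ht ht' h hc
      · have hc : t - t' ≤ 1 / 3 ^ (J * n) := by
          rw [abs_of_nonneg (by linarith)] at hJ2
          exact hJ2
        rw [abs_sub_comm]
        exact close_bound n i hi1 hin J ht' ht h hc
    have hnne : ((n : ℝ)) ≠ 0 := by positivity
    have hrp : (1 : ℝ) / 3 ^ (J + 1) ≤ |t - t'| ^ ((1 : ℝ) / n) := by
      have hbase : (0 : ℝ) ≤ 1 / 3 ^ ((J + 1) * n) := by positivity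
      have h1 : ((1 : ℝ) / 3 ^ ((J + 1) * n)) ^ ((1 : ℝ) / n)
          ≤ |t - t'| ^ ((1 : ℝ) / n) :=
        Real.rpow_le_rpow hbase (le_of_lt hJ1) (by positivity)
      have h2 : ((1 : ℝ) / 3 ^ ((J + 1) * n)) ^ ((1 : ℝ) / n) = 1 / 3 ^ (J + 1) := by
        rw [show (1 : ℝ) / 3 ^ ((J + 1) * n) = ((1 / 3 : ℝ)) ^ ((J + 1) * n) from
            (one_div_pow 3 _).symm,
          show ((1 / 3 : ℝ)) ^ ((J + 1) * n) = ((1 / 3 : ℝ) ^ (J + 1)) ^ n from pow_mul _ _ _,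
          ← Real.rpow_natCast ((1 / 3 : ℝ) ^ (J + 1)) n, ← Real.rpow_mul (by positivity)]
        rw [mul_one_div, div_self hnne, Real.rpow_one, one_div_pow]
      rw [← h2]
      exact h1
    calc |peanoCoord n i t - peanoCoord n i t'| ≤ 2 / 3 ^ J := hcb
      _ = 6 * (1 / 3 ^ (J + 1)) := by rw [pow_succ]; ring
      _ ≤ 6 * |t - t'| ^ ((1 : ℝ) / n) := by linarith [hrp]
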